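/- arXiv:1610.03962 — 5 statements merged into one kernel-verified Lean document; each statement's English description precedes it below -/
import Mathlib

section
/- (Euler's theorem) For a triangle with circumcenter O, incenter I, circumradius R, and inradius r, one has |OI|² = R² − 2Rr. -/
/-!
Lagrange's identity `‖∑ xᵢ pᵢ‖² = (∑ xᵢ)(∑ xᵢ ‖pᵢ‖²) - ∑_{i<j} xᵢ xⱼ ‖pᵢ - pⱼ‖²`, applied to the
vertices with the incenter's barycentric weights `a, b, c`: since every `‖pᵢ‖ = R` and
`‖pᵢ - pⱼ‖` is the side opposite the third vertex, the pairwise terms add up to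
`abc (a + b + c)`, and `abc / (a + b + c) = 2Rr`.
-/

theorem norm_smul_add_smul_add_smul_sq {E : Type*} [NormedAddCommGroup E] [InnerProductSpace ℝ E]
    (x y z : ℝ) (u v w : E) :
    ‖x • u + y • v + z • w‖ ^ 2 =
      (x + y + z) * (x * ‖u‖ ^ 2 + y * ‖v‖ ^ 2 + z * ‖w‖ ^ 2) -
        (x * y * ‖u - v‖ ^ 2 + x * z * ‖u - w‖ ^ 2 + y * z * ‖v - w‖ ^ 2) := by
  simp only [← real_inner_self_eq_norm_sq, inner_add_left, inner_add_right, inner_sub_left,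
    inner_sub_right, real_inner_smul_left, real_inner_smul_right, real_inner_comm u v,
    real_inner_comm u w, real_inner_comm v w]
  ring

theorem euler_OI_general
    (u v w : EuclideanSpace ℝ (Fin 2)) (R a b c s r : ℝ)
    (hu : ‖u‖ = R) (hv : ‖v‖ = R) (hw : ‖w‖ = R)
    (ha : a = ‖v - w‖) (hb : b = ‖u - w‖) (hc : c = ‖u - v‖)
    (ha0 : 0 < a) (hb0 : 0 < b) (hc0 : 0 < c)
    (hs : s = (a + b + c) / 2)
    (hRr : R * r = a * b * c / (4 * s)) :
    ‖(2 * s)⁻¹ • (a • u + b • v + c • w)‖ ^ 2 = R ^ 2 - 2 * R * r := by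
  have h2s : 2 * s = a + b + c := by rw [hs]; ring
  have hpos : 0 < a + b + c := by linarith
  have h2Rr : 2 * R * r = a * b * c / (a + b + c) := by
    rw [mul_assoc, hRr, ← h2s]; field_simp; ring
  have hsum : ‖a • u + b • v + c • w‖ ^ 2 =
      (a + b + c) ^ 2 * R ^ 2 - a * b * c * (a + b + c) := by
    rw [norm_smul_add_smul_add_smul_sq, hu, hv, hw, ← ha, ← hb, ← hc]; ring
  rw [norm_smul, mul_pow, hsum, h2s, h2Rr, norm_inv, Real.norm_of_nonneg hpos.le]
  field_simp

theorem euler_OI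
    (u v w : EuclideanSpace ℝ (Fin 2)) (R a b c s F r : ℝ)
    (hu : ‖u‖ = R) (hv : ‖v‖ = R) (hw : ‖w‖ = R)
    (ha : a = ‖v - w‖) (hb : b = ‖u - w‖) (hc : c = ‖u - v‖)
    (ha0 : 0 < a) (hb0 : 0 < b) (hc0 : 0 < c)
    (hs : s = (a + b + c) / 2)
    (hF : F ^ 2 = s * (s - a) * (s - b) * (s - c))
    (hr : r = F / s)
    (hRr : R * r = a * b * c / (4 * s)) :
    ‖(2 * s)⁻¹ • (a • u + b • v + c • w)‖ ^ 2 = R ^ 2 - 2 * R * r :=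
  euler_OI_general u v w R a b c s r hu hv hw ha hb hc ha0 hb0 hc0 hs hRr
end

section
/- (Feuerbach) The distance from the incenter I to the nine-point center N equals R/2 − r, where R is the circumradius and r the inradius; hence the nine-point circle (radius R/2) is internally tangent to the incircle. -/
open RealInnerProductSpace

/-!
With weights `α = s - a`, `β = s - b`, `γ = s - c` summing to `s`, the vector `N - I` is
`(2s)⁻¹ (α u + β v + γ w)`. For points on a sphere of radius `R` about the origin,
`‖α u + β v + γ w‖² = (α + β + γ)² R² - (β γ a² + α γ b² + α β c²)`, and the symmetric sum
equals `4 s² R r - 4 s² r²` by Heron and `abc = 4 s R r`. Hence `‖N - I‖² = (R/2 - r)²`,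
and Euler's inequality `2r ≤ R` fixes the sign.
-/

section Sphere

variable {V : Type*} [NormedAddCommGroup V] [InnerProductSpace ℝ V]

lemma inner_eq_of_norm_eq {x y : V} {R : ℝ} (hx : ‖x‖ = R) (hy : ‖y‖ = R) :
    ⟪x, y⟫ = R ^ 2 - ‖x - y‖ ^ 2 / 2 := by
  rw [norm_sub_sq_real, hx, hy]
  ring

lemma norm_sq_weighted_sum_of_norm_eq {u v w : V} {R : ℝ}
    (hu : ‖u‖ = R) (hv : ‖v‖ = R) (hw : ‖w‖ = R) (α β γ : ℝ) :
    ‖α • u + β • v + γ • w‖ ^ 2 = (α + β + γ) ^ 2 * R ^ 2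
      - (β * γ * ‖v - w‖ ^ 2 + α * γ * ‖u - w‖ ^ 2 + α * β * ‖u - v‖ ^ 2) := by
  have huv := inner_eq_of_norm_eq hu hv
  have huw := inner_eq_of_norm_eq hu hw
  have hvw := inner_eq_of_norm_eq hv hw
  have hself {x : V} (hx : ‖x‖ = R) : ⟪x, x⟫ = R ^ 2 := by rw [real_inner_self_eq_norm_sq, hx]
  rw [← real_inner_self_eq_norm_sq]
  simp only [inner_add_left, inner_add_right, real_inner_smul_left, real_inner_smul_right,
    hself hu, hself hv, hself hw, real_inner_comm u v, real_inner_comm u w, real_inner_comm v w,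
    huv, huw, hvw]
  ring

end Sphere

lemma ninePoint_sub_incenter_eq {V : Type*} [AddCommGroup V] [Module ℝ V] (u v w : V)
    {a b c s : ℝ} (hs0 : s ≠ 0) :
    (2⁻¹ : ℝ) • (u + v + w) - (2 * s)⁻¹ • (a • u + b • v + c • w)
      = (2 * s)⁻¹ • ((s - a) • u + (s - b) • v + (s - c) • w) := by
  match_scalars <;> field_simp

lemma sum_mul_sq_eq_heron {a b c s : ℝ} (hs : s = (a + b + c) / 2) :
    (s - b) * (s - c) * a ^ 2 + (s - a) * (s - c) * b ^ 2 + (s - a) * (s - b) * c ^ 2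
      = a * b * c * s - 4 * (s * (s - a) * (s - b) * (s - c)) := by
  subst hs
  ring

theorem feuerbach_incircle_general
    (u v w : EuclideanSpace ℝ (Fin 2)) (R a b c s F r : ℝ)
    (hu : ‖u‖ = R) (hv : ‖v‖ = R) (hw : ‖w‖ = R)
    (ha : a = ‖v - w‖) (hb : b = ‖u - w‖) (hc : c = ‖u - v‖)
    (ha0 : 0 < a) (hb0 : 0 < b) (hc0 : 0 < c)
    (hs : s = (a + b + c) / 2)
    (hF : F ^ 2 = s * (s - a) * (s - b) * (s - c))
    (hr : r = F / s)
    (hRr : R * r = a * b * c / (4 * s))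
    (hEuler : 2 * r ≤ R) :
    ‖(2⁻¹ : ℝ) • (u + v + w) - (2 * s)⁻¹ • (a • u + b • v + c • w)‖ = R / 2 - r := by
  have hs0 : 0 < s := by linarith
  have habc : a * b * c = 4 * s * (R * r) := by rw [hRr]; field_simp
  have hHeron : s * (s - a) * (s - b) * (s - c) = (s * r) ^ 2 := by
    rw [← hF, hr]; field_simp
  set W := (s - a) • u + (s - b) • v + (s - c) • w
  have hW_sq : ‖W‖ ^ 2 = (s * (R - 2 * r)) ^ 2 := by
    rw [norm_sq_weighted_sum_of_norm_eq hu hv hw, ← ha, ← hb, ← hc,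
      sum_mul_sq_eq_heron hs, habc, hHeron]
    have hweights : s - a + (s - b) + (s - c) = s := by linarith
    rw [hweights]
    ring
  have hW : ‖W‖ = s * (R - 2 * r) :=
    (pow_left_inj₀ (norm_nonneg W) (mul_nonneg hs0.le (by linarith)) two_ne_zero).mp hW_sq
  rw [ninePoint_sub_incenter_eq u v w hs0.ne', norm_smul, hW, Real.norm_of_nonneg (by positivity)]
  field_simp

theorem feuerbach_incircle
    (u v w : EuclideanSpace ℝ (Fin 2)) (R a b c s F r : ℝ)
    (hu : ‖u‖ = R) (hv : ‖v‖ = R) (hw : ‖w‖ = R)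
    (ha : a = ‖v - w‖) (hb : b = ‖u - w‖) (hc : c = ‖u - v‖)
    (ha0 : 0 < a) (hb0 : 0 < b) (hc0 : 0 < c)
    (hs : s = (a + b + c) / 2)
    (hF : F ^ 2 = s * (s - a) * (s - b) * (s - c)) (hF0 : 0 < F)
    (hr : r = F / s)
    (hRr : R * r = a * b * c / (4 * s))
    (hEuler : 2 * r ≤ R) :
    ‖(2⁻¹ : ℝ) • (u + v + w) - (2 * s)⁻¹ • (a • u + b • v + c • w)‖ = R / 2 - r :=
  feuerbach_incircle_general u v w R a b c s F r hu hv hw ha hb hc ha0 hb0 hc0 hs hF hr hRr hEuler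
end

section
/- (Feuerbach) The distance from the excenter I_c opposite vertex C to the nine-point center N equals R/2 + r_c, where R is the circumradius and r_c the exradius opposite C; hence the nine-point circle is externally tangent to the excircle opposite C. -/
/-! With the circumcentre at the origin,
`N - I_c = (-(s - b) • u - (s - a) • v + s • w) / (2 (s - c))`, and for vectors `u, v, w` of norm `R`
`‖x u + y v + z w‖² = (x + y + z)² R² - (y z a² + z x b² + x y c²)`.
So `‖N - I_c‖²` is explicit in `R` and the sides, and comparing it with `(R/2 + r_c)²` through
`4 R r_c (s - c) = a b c` and `r_c² (s - c) = s (s - a) (s - b)` is a polynomial identity. -/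

theorem norm_smul_add_smul_add_smul_sq_of_norm_eq {E : Type*} [NormedAddCommGroup E]
    [InnerProductSpace ℝ E] {u v w : E} {R : ℝ} (hu : ‖u‖ = R) (hv : ‖v‖ = R) (hw : ‖w‖ = R)
    (x y z : ℝ) :
    ‖x • u + y • v + z • w‖ ^ 2 = (x + y + z) ^ 2 * R ^ 2
      - (y * z * ‖v - w‖ ^ 2 + z * x * ‖u - w‖ ^ 2 + x * y * ‖u - v‖ ^ 2) := by
  rw [norm_sub_sq_real, norm_sub_sq_real, norm_sub_sq_real, norm_add_sq_real, norm_add_sq_real]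
  simp only [norm_smul, inner_add_left, real_inner_smul_left, real_inner_smul_right,
    Real.norm_eq_abs, mul_pow, sq_abs, hu, hv, hw]
  ring

theorem feuerbach_excircle_general
    (u v w : EuclideanSpace ℝ (Fin 2)) (R a b c s F rc : ℝ)
    (hu : ‖u‖ = R) (hv : ‖v‖ = R) (hw : ‖w‖ = R)
    (ha : a = ‖v - w‖) (hb : b = ‖u - w‖) (hc : c = ‖u - v‖)
    (hs : s = (a + b + c) / 2) (hsc : c < s)
    (hF : F ^ 2 = s * (s - a) * (s - b) * (s - c)) (hF0 : 0 < F)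
    (hrc : rc = F / (s - c))
    (hRrc : R * rc = a * b * c / (4 * (s - c))) :
    ‖(2⁻¹ : ℝ) • (u + v + w) - (2 * (s - c))⁻¹ • (a • u + b • v - c • w)‖ = R / 2 + rc := by
  have hsc' : 0 < s - c := sub_pos.mpr hsc
  have hrc_sq : rc ^ 2 * (s - c) = s * (s - a) * (s - b) := by
    rw [hrc, div_pow]; field_simp; linear_combination hF
  have hRrc' : 4 * (R * rc) * (s - c) = a * b * c := by
    rw [hRrc]; field_simp
  have hNI : (2⁻¹ : ℝ) • (u + v + w) - (2 * (s - c))⁻¹ • (a • u + b • v - c • w)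
      = (-(s - b) / (2 * (s - c))) • u + (-(s - a) / (2 * (s - c))) • v
        + (s / (2 * (s - c))) • w := by
    match_scalars <;> field_simp <;> linarith
  have hR : 0 ≤ R := hu ▸ norm_nonneg u
  have hrc0 : 0 ≤ rc := hrc ▸ div_nonneg hF0.le hsc'.le
  rw [← sq_eq_sq₀ (norm_nonneg _) (by positivity), hNI,
    norm_smul_add_smul_add_smul_sq_of_norm_eq hu hv hw, ← ha, ← hb, ← hc]
  field_simp
  obtain rfl : c = 2 * s - a - b := by linarith
  linear_combination (s - a - b) * hRrc' + 4 * (s - a - b) * hrc_sq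

theorem feuerbach_excircle
    (u v w : EuclideanSpace ℝ (Fin 2)) (R a b c s F rc : ℝ)
    (hu : ‖u‖ = R) (hv : ‖v‖ = R) (hw : ‖w‖ = R)
    (ha : a = ‖v - w‖) (hb : b = ‖u - w‖) (hc : c = ‖u - v‖)
    (ha0 : 0 < a) (hb0 : 0 < b) (hc0 : 0 < c)
    (hs : s = (a + b + c) / 2) (hsc : c < s)
    (hF : F ^ 2 = s * (s - a) * (s - b) * (s - c)) (hF0 : 0 < F)
    (hrc : rc = F / (s - c))
    (hRrc : R * rc = a * b * c / (4 * (s - c))) :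
    ‖(2⁻¹ : ℝ) • (u + v + w) - (2 * (s - c))⁻¹ • (a • u + b • v - c • w)‖ = R / 2 + rc :=
  feuerbach_excircle_general u v w R a b c s F rc hu hv hw ha hb hc hs hsc hF hF0 hrc hRrc
end

section
/- For the coefficients α = (s−a)/(2s), β = (s−b)/(2s), γ = (s−c)/(2s), one has a²βγ + b²αγ + c²αβ = rR − r², where r = F/s is the inradius, rR = abc/(4s), and F² = s(s−a)(s−b)(s−c). -/
/-!
Since `r² = F²/s² = (s-a)(s-b)(s-c)/s`, multiplying by `4s²` turns the identity into the polynomial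
identity `a²(s-b)(s-c) + b²(s-a)(s-c) + c²(s-a)(s-b) = s·abc - 4s(s-a)(s-b)(s-c)` in `a, b, c`.
-/

lemma sq_sqrt_mul_div_self {s x : ℝ} (h : 0 ≤ s * x) : (√(s * x) / s) ^ 2 = x / s := by
  rcases eq_or_ne s 0 with rfl | hs
  · simp
  · rw [div_pow, Real.sq_sqrt h]
    field_simp

lemma sum_sq_mul_semiperimeter_sub {a b c s : ℝ} (hs : s = (a + b + c) / 2) :
    a ^ 2 * (s - b) * (s - c) + b ^ 2 * (s - a) * (s - c) + c ^ 2 * (s - a) * (s - b) =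
      s * (a * b * c) - 4 * s * ((s - a) * (s - b) * (s - c)) := by
  subst hs
  ring

theorem incircle_coefficient_identity_general
    (a b c s F r R : ℝ)
    (hab : a < b + c) (hbc : b < a + c) (hca : c < a + b)
    (hs : s = (a + b + c) / 2)
    (hF : F = Real.sqrt (s * (s - a) * (s - b) * (s - c)))
    (hr : r = F / s)
    (hrR : r * R = a * b * c / (4 * s)) :
    a ^ 2 * ((s - b) / (2 * s)) * ((s - c) / (2 * s)) +
      b ^ 2 * ((s - a) / (2 * s)) * ((s - c) / (2 * s)) +
      c ^ 2 * ((s - a) / (2 * s)) * ((s - b) / (2 * s)) = r * R - r ^ 2 := by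
  have hs0 : 0 < s := by rw [hs]; linarith
  have hsa : 0 < s - a := by rw [hs]; linarith
  have hsb : 0 < s - b := by rw [hs]; linarith
  have hsc : 0 < s - c := by rw [hs]; linarith
  have hr2 : r ^ 2 = (s - a) * (s - b) * (s - c) / s := by
    rw [hr, hF, mul_assoc, mul_assoc, sq_sqrt_mul_div_self (by positivity), ← mul_assoc]
  rw [hrR, hr2]
  field_simp
  linear_combination 4 * sum_sq_mul_semiperimeter_sub hs

theorem incircle_coefficient_identity
    (a b c s F r R : ℝ)
    (ha0 : 0 < a) (hb0 : 0 < b) (hc0 : 0 < c)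
    (hab : a < b + c) (hbc : b < a + c) (hca : c < a + b)
    (hs : s = (a + b + c) / 2)
    (hF : F = Real.sqrt (s * (s - a) * (s - b) * (s - c)))
    (hr : r = F / s)
    (hrR : r * R = a * b * c / (4 * s)) :
    a ^ 2 * ((s - b) / (2 * s)) * ((s - c) / (2 * s)) +
      b ^ 2 * ((s - a) / (2 * s)) * ((s - c) / (2 * s)) +
      c ^ 2 * ((s - a) / (2 * s)) * ((s - b) / (2 * s)) = r * R - r ^ 2 :=
  incircle_coefficient_identity_general a b c s F r R hab hbc hca hs hF hr hrR
end

section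
/- For the coefficients α = −(s−b)/(2(s−c)), β = −(s−a)/(2(s−c)), γ = s/(2(s−c)), one has a²βγ + b²αγ + c²αβ = −r_c² − r_c R, where r_c = F/(s−c), R satisfies r_c R = abc/(4(s−c)), and F² = s(s−a)(s−b)(s−c). -/
/-!
Over the common denominator `4 (s - c)²` the left side has numerator
`-(a² s (s - a) + b² s (s - b) - c² (s - a) (s - b)) = -4 s (s - a) (s - b) (s - c) - a b c (s - c)`,
and the two terms are `r_c² · 4 (s - c)²` (Heron: `F² = s (s - a) (s - b) (s - c)`) and
`r_c R · 4 (s - c)²`.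
-/

lemma semiperimeter_sub_pos {a b c s : ℝ} (hs : s = (a + b + c) / 2) (hc : c < a + b) :
    0 < s - c := by
  rw [hs]; linarith

lemma semiperimeter_heron_product_pos {a b c s : ℝ} (hs : s = (a + b + c) / 2)
    (hab : a < b + c) (hbc : b < a + c) (hca : c < a + b) :
    0 < s * (s - a) * (s - b) * (s - c) := by
  have hsa := semiperimeter_sub_pos (s := s) (by rw [hs]; ring) hab
  have hsb := semiperimeter_sub_pos (s := s) (by rw [hs]; ring) hbc
  have hsc := semiperimeter_sub_pos hs hca
  have hs0 : 0 < s := by linarith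
  positivity

lemma semiperimeter_identity {a b c s : ℝ} (hs : s = (a + b + c) / 2) :
    a ^ 2 * s * (s - a) + b ^ 2 * s * (s - b) - c ^ 2 * (s - a) * (s - b) =
      4 * s * (s - a) * (s - b) * (s - c) + a * b * c * (s - c) := by
  subst hs; ring

theorem excircle_coefficient_identity_general
    (a b c s F rc R : ℝ)
    (hab : a < b + c) (hbc : b < a + c) (hca : c < a + b)
    (hs : s = (a + b + c) / 2)
    (hF : F = Real.sqrt (s * (s - a) * (s - b) * (s - c)))
    (hrc : rc = F / (s - c))
    (hrcR : rc * R = a * b * c / (4 * (s - c))) :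
    a ^ 2 * (-(s - a) / (2 * (s - c))) * (s / (2 * (s - c))) +
      b ^ 2 * (-(s - b) / (2 * (s - c))) * (s / (2 * (s - c))) +
      c ^ 2 * (-(s - b) / (2 * (s - c))) * (-(s - a) / (2 * (s - c))) =
      -rc ^ 2 - rc * R := by
  have hsc : s - c ≠ 0 := (semiperimeter_sub_pos hs hca).ne'
  have hrc2 : rc ^ 2 = s * (s - a) * (s - b) * (s - c) / (s - c) ^ 2 := by
    rw [hrc, hF, div_pow, Real.sq_sqrt (semiperimeter_heron_product_pos hs hab hbc hca).le]
  calc _ = -(a ^ 2 * s * (s - a) + b ^ 2 * s * (s - b) - c ^ 2 * (s - a) * (s - b))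
          / (4 * (s - c) ^ 2) := by field_simp; ring
    _ = -(4 * s * (s - a) * (s - b) * (s - c) + a * b * c * (s - c)) / (4 * (s - c) ^ 2) := by
          rw [semiperimeter_identity hs]
    _ = -rc ^ 2 - rc * R := by
          rw [hrc2, hrcR]; field_simp; ring

theorem excircle_coefficient_identity
    (a b c s F rc R : ℝ)
    (ha0 : 0 < a) (hb0 : 0 < b) (hc0 : 0 < c)
    (hab : a < b + c) (hbc : b < a + c) (hca : c < a + b)
    (hs : s = (a + b + c) / 2)
    (hF : F = Real.sqrt (s * (s - a) * (s - b) * (s - c)))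
    (hrc : rc = F / (s - c))
    (hrcR : rc * R = a * b * c / (4 * (s - c))) :
    a ^ 2 * (-(s - a) / (2 * (s - c))) * (s / (2 * (s - c))) +
      b ^ 2 * (-(s - b) / (2 * (s - c))) * (s / (2 * (s - c))) +
      c ^ 2 * (-(s - b) / (2 * (s - c))) * (-(s - a) / (2 * (s - c))) =
      -rc ^ 2 - rc * R :=
  excircle_coefficient_identity_general a b c s F rc R hab hbc hca hs hF hrc hrcR
end
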